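/- arXiv:2509.09561 — 5 statements merged into one kernel-verified Lean document; each statement's English description precedes it below -/
import Mathlib

section
/- Let β ∈ (0, 1/2) and define G(y) = max(|y - β|, |y - 1/2|) if y < (1 + β)/2, and G(y) = max(|y - 1/2|, |y - 1|) if y ≥ (1 + β)/2. Then for every y ∈ ℝ, G(y) ≥ (β/(1 - β))·|y| + (1/4 - β)/(1 - β). -/
/-!
The bound `b(y) = (β |y| + 1/4 - β) / (1 - β)` is dominated by a single distance on each piece
of the line: by `|y - 1/2|` left of `(2β + 1)/4` (the midpoint of `β` and `1/2`) and right of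
`3/4`, by `|y - β|` right of `(2β + 1)/4`, and by `|y - 1|` on `[0, 3/4]`. On each branch of `G`
these pieces cover the line; for instance `(1 - β)(y - β) - (β y + 1/4 - β) = (1 - 2β)(y - (2β + 1)/4)`.
-/

noncomputable def costLowerBound (β y : ℝ) : ℝ :=
  β / (1 - β) * |y| + (1/4 - β) / (1 - β)

variable {β y : ℝ}

lemma costLowerBound_le_iff (hβ : β < 1) (d : ℝ) :
    costLowerBound β y ≤ d ↔ β * |y| + (1/4 - β) ≤ (1 - β) * d := by
  rw [costLowerBound, div_mul_eq_mul_div, ← add_div, div_le_iff₀ (by linarith), mul_comm d]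

lemma costLowerBound_le_abs_sub_half (hβ₀ : -1/2 ≤ β) (hβ₁ : β < 1/2)
    (hy : y ≤ (2 * β + 1) / 4 ∨ 3/4 ≤ y) : costLowerBound β y ≤ |y - 1/2| := by
  rw [costLowerBound_le_iff (by linarith)]
  rcases hy with hy | hy
  · rw [abs_of_nonpos (by linarith : y - 1/2 ≤ 0)]
    rcases abs_cases y with ⟨hy', -⟩ | ⟨hy', hneg⟩
    · rw [hy']; nlinarith
    · rw [hy']; nlinarith [mul_nonneg (neg_nonneg.2 hneg.le) (by linarith : (0 : ℝ) ≤ 1 - 2 * β)]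
  · rw [abs_of_nonneg (by linarith : 0 ≤ y - 1/2), abs_of_nonneg (by linarith : 0 ≤ y)]
    nlinarith [mul_nonneg (by linarith : (0 : ℝ) ≤ 1 - 2 * β) (by linarith : 0 ≤ y - 3/4)]

lemma costLowerBound_le_abs_sub_self (hβ₀ : -1/2 ≤ β) (hβ₁ : β < 1/2) (hy : (2 * β + 1) / 4 ≤ y) :
    costLowerBound β y ≤ |y - β| := by
  rw [costLowerBound_le_iff (by linarith), abs_of_nonneg (by linarith : 0 ≤ y),
    abs_of_nonneg (by linarith : 0 ≤ y - β)]
  nlinarith [mul_nonneg (by linarith : (0 : ℝ) ≤ 1 - 2 * β) (by linarith : 0 ≤ y - (2 * β + 1) / 4)]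

lemma costLowerBound_le_abs_sub_one (hβ : β < 1) (hy₀ : 0 ≤ y) (hy₁ : y ≤ 3/4) :
    costLowerBound β y ≤ |y - 1| := by
  rw [costLowerBound_le_iff hβ, abs_of_nonneg hy₀, abs_of_nonpos (by linarith : y - 1 ≤ 0)]
  linarith

theorem stmt_4 (β : ℝ) (hβ0 : 0 < β) (hβ1 : β < 1/2) (y : ℝ) :
    (if y < (1 + β)/2 then max |y - β| |y - 1/2| else max |y - 1/2| |y - 1|) ≥
      (β / (1 - β)) * |y| + (1/4 - β) / (1 - β) := by
  have hβ : -1/2 ≤ β := by linarith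
  change _ ≥ costLowerBound β y
  split_ifs with hbranch
  · rcases le_total y ((2 * β + 1) / 4) with hy | hy
    · exact le_max_of_le_right (costLowerBound_le_abs_sub_half hβ hβ1 (.inl hy))
    · exact le_max_of_le_left (costLowerBound_le_abs_sub_self hβ hβ1 hy)
  · rcases le_total y (3/4) with hy | hy
    · exact le_max_of_le_right (costLowerBound_le_abs_sub_one (by linarith) (by linarith) hy)
    · exact le_max_of_le_left (costLowerBound_le_abs_sub_half hβ hβ1 (.inr hy))
end

section
/- Let n ≥ 3, 1 ≤ z ≤ ⌊(n-1)/2⌋, and let x : Fin n → ℝ be sorted (x₁ ≤ ... ≤ x_n). Let y* be an optimal location for the egalitarian objective with z outliers, and let S* be a corresponding optimal set of n - z non-outliers. Then max_{i ∈ S*} |x_{z+1} - x_i| ≤ 2 · OPT*_MC(x, z). -/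
/-- Egalitarian social cost with `z` outliers of placing the facility at `y`:
minimum over sets `S` of `n - z` non-outliers of the maximum distance. -/
noncomputable def OPTmc (n z : ℕ) (x : Fin n → ℝ) (y : ℝ) : ℝ :=
  sInf {c : ℝ | ∃ S : Finset (Fin n), S.card = n - z ∧ c = ⨆ i ∈ S, |y - x i|}

/-- Optimal egalitarian social cost with `z` outliers. -/
noncomputable def OPTmcStar (n z : ℕ) (x : Fin n → ℝ) : ℝ :=
  sInf (Set.range (OPTmc n z x))

/-!
Since `S*` has `n - z > n / 2` points, it meets both `{x₁, …, x_{z+1}}` and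
`{x_{z+1}, …, x_n}`; so `x_{z+1}` lies between two points of `S*` and hence, like
every point of `S*`, within `OPT*` of `y*`. The triangle inequality through `y*`
gives the factor `2`.
-/

open Finset

namespace Finset

variable {α : Type*} [Fintype α] [DecidableEq α] [Preorder α]

theorem exists_mem_le_of_card_lt [LocallyFiniteOrderBot α] {s : Finset α} {a : α}
    (h : Fintype.card α < #s + #(Iic a)) : ∃ j ∈ s, j ≤ a := by
  obtain ⟨j, hj⟩ := inter_nonempty_of_card_lt_card_add_card (subset_univ s)
    (subset_univ (Iic a)) (by rwa [card_univ])
  rw [mem_inter, mem_Iic] at hj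
  exact ⟨j, hj⟩

theorem exists_mem_ge_of_card_lt [LocallyFiniteOrderTop α] {s : Finset α} {a : α}
    (h : Fintype.card α < #s + #(Ici a)) : ∃ k ∈ s, a ≤ k := by
  obtain ⟨k, hk⟩ := inter_nonempty_of_card_lt_card_add_card (subset_univ s)
    (subset_univ (Ici a)) (by rwa [card_univ])
  rw [mem_inter, mem_Ici] at hk
  exact ⟨k, hk⟩

variable {ι : Type*}

theorem le_biSup_real {s : Finset ι} (f : ι → ℝ) {i : ι} (hi : i ∈ s) :
    f i ≤ ⨆ j ∈ s, f j := by
  have hbdd : BddAbove (Set.range fun j => ⨆ _ : j ∈ s, f j) := by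
    -- for `j ∉ s` the inner supremum is `sSup ∅ = 0`
    refine (((s.finite_toSet.image f).insert 0).subset ?_).bddAbove
    rintro _ ⟨j, rfl⟩
    by_cases hj : j ∈ s
    · exact Or.inr ⟨j, hj, (ciSup_pos (f := fun _ => f j) hj).symm⟩
    · simp [hj]
  exact (ciSup_pos hi).symm.le.trans (le_ciSup hbdd i)

theorem biSup_real_le {s : Finset ι} {f : ι → ℝ} {r : ℝ} (hr : 0 ≤ r)
    (h : ∀ i ∈ s, f i ≤ r) : (⨆ i ∈ s, f i) ≤ r :=
  Real.iSup_le (fun i => Real.iSup_le (h i) hr) hr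

end Finset

theorem abs_sub_le_of_mem_Icc {y u v w r : ℝ} (hu : |y - u| ≤ r) (hv : |y - v| ≤ r)
    (hw : w ∈ Set.Icc u v) : |y - w| ≤ r := by
  rw [abs_le] at *
  constructor <;> linarith [hw.1, hw.2]

theorem biSup_abs_sub_le_two_mul {ι : Type*} {s : Finset ι} {x : ι → ℝ} {y c r : ℝ}
    (hc : |y - c| ≤ r) (hs : ∀ i ∈ s, |y - x i| ≤ r) :
    (⨆ i ∈ s, |c - x i|) ≤ 2 * r := by
  refine biSup_real_le (by linarith [abs_nonneg (y - c)]) fun i hi => ?_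
  calc |c - x i| ≤ |c - y| + |y - x i| := abs_sub_le c y (x i)
    _ ≤ 2 * r := by rw [abs_sub_comm]; linarith [hs i hi]

theorem stmt_6 (n z : ℕ) (hz1 : 1 ≤ z) (hz2 : z ≤ (n - 1) / 2)
    (x : Fin n → ℝ) (hx : Monotone x)
    (ystar : ℝ) (Sstar : Finset (Fin n)) (hcard : Sstar.card = n - z)
    (hopt : (⨆ i ∈ Sstar, |ystar - x i|) = OPTmcStar n z x) :
    (⨆ i ∈ Sstar, |x ⟨z, by omega⟩ - x i|) ≤ 2 * OPTmcStar n z x := by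
  rw [← hopt]
  set a : Fin n := ⟨z, by omega⟩
  have hS : ∀ i ∈ Sstar, |ystar - x i| ≤ ⨆ j ∈ Sstar, |ystar - x j| :=
    fun i hi => le_biSup_real (fun j => |ystar - x j|) hi
  obtain ⟨j, hjS, hja⟩ : ∃ j ∈ Sstar, j ≤ a :=
    exists_mem_le_of_card_lt (by simp only [Fintype.card_fin, hcard, Fin.card_Iic, a]; omega)
  obtain ⟨k, hkS, hak⟩ : ∃ k ∈ Sstar, a ≤ k :=
    exists_mem_ge_of_card_lt (by simp only [Fintype.card_fin, hcard, Fin.card_Ici, a]; omega)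
  exact biSup_abs_sub_le_two_mul
    (abs_sub_le_of_mem_Icc (hS j hjS) (hS k hkS) ⟨hx hja, hx hak⟩) hS
end

section
/- Let n ≥ 3, 1 ≤ z ≤ n - 2, and x : Fin n → ℝ sorted. Suppose y* ∈ ℝ and S* ⊆ {1,...,n} with |S*| = n - z minimize the utilitarian social cost Σ_{i ∈ S*} |y* - x_i|. Then S* consists of a contiguous block of indices: there exists z_ℓ ∈ {0,...,z} such that S* = {z_ℓ + 1, ..., n - (z - z_ℓ)}. -/
open Finset

/-- quasiconvexity of `t ↦ |y - t|` -/
private lemma abs_qc (y a b c : ℝ) (h1 : a ≤ b) (h2 : b ≤ c) :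
    |y - b| ≤ max |y - a| |y - c| := by
  rcases le_total y b with h | h
  · have : |y - b| = b - y := by rw [abs_sub_comm, abs_of_nonneg (by linarith)]
    have hc : c - y ≤ |y - c| := by rw [abs_sub_comm]; exact le_abs_self _
    refine le_max_of_le_right ?_
    linarith
  · have : |y - b| = y - b := abs_of_nonneg (by linarith)
    have ha : y - a ≤ |y - a| := le_abs_self _
    refine le_max_of_le_left ?_
    linarith

/-- strict monotone gap lemma on `Fin` -/
private lemma gap_lemma {k n : ℕ} (σ : Fin k → Fin n) (h : StrictMono σ) :
    ∀ d : ℕ, ∀ m m' : Fin k, m.val + d = m'.val → (σ m).val + d ≤ (σ m').val := by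
  intro d
  induction d with
  | zero =>
    intro m m' hmm
    have : m = m' := Fin.ext (by omega)
    subst this; omega
  | succ d ih =>
    intro m m' hmm
    have h1 : d < m'.val := by omega
    have hlt : m'.val - 1 < k := by omega
    have h2 := ih m ⟨m'.val - 1, hlt⟩ (by simp; omega)
    have h3 : σ ⟨m'.val - 1, hlt⟩ < σ m' := h (by rw [Fin.lt_def]; simp; omega)
    rw [Fin.lt_def] at h3
    omega

/-- lower sets in `Fin k` are initial segments -/
private lemma lower_set_iff {k : ℕ} (Q : Fin k → Prop) [DecidablePred Q]
    (hdc : ∀ m m' : Fin k, m ≤ m' → Q m' → Q m) (m : Fin k) :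
    Q m ↔ m.val < (univ.filter Q).card := by
  constructor
  · intro hQ
    have hsub : Finset.Iic m ⊆ univ.filter Q := by
      intro i hi
      exact mem_filter.mpr ⟨mem_univ _, hdc i m (mem_Iic.mp hi) hQ⟩
    have := card_le_card hsub
    rw [Fin.card_Iic] at this
    omega
  · intro hcard
    by_contra hQ
    have hsub : univ.filter Q ⊆ Finset.Iio m := by
      intro i hi
      rw [mem_Iio]
      by_contra hge
      exact hQ (hdc m i (le_of_not_gt hge) (mem_filter.mp hi).2)
    have := card_le_card hsub
    rw [Fin.card_Iio] at this
    omega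

/-- the candidate interval of indices -/
private def itv (n z zl : ℕ) : Finset (Fin n) :=
  univ.filter (fun i : Fin n => zl ≤ i.val ∧ i.val < n - (z - zl))

private lemma itv_eq_image (n z zl : ℕ) (hzl : zl ≤ z) (hz : z ≤ n) :
    itv n z zl = Finset.image
      (fun m : Fin (n - z) => (⟨zl + m.val, by omega⟩ : Fin n)) univ := by
  ext i
  simp only [itv, mem_filter, mem_univ, true_and, Finset.mem_image]
  constructor
  · rintro ⟨h1, h2⟩
    refine ⟨⟨i.val - zl, by omega⟩, ?_⟩
    exact Fin.ext (show zl + (i.val - zl) = i.val by omega)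
  · rintro ⟨m, hm⟩
    have := m.isLt
    have : i.val = zl + m.val := by rw [← hm]
    omega

private lemma itv_inj (n z zl : ℕ) (hzl : zl ≤ z) (hz : z ≤ n) :
    ∀ m₁ : Fin (n - z), ∀ m₂ : Fin (n - z),
      (⟨zl + m₁.val, by omega⟩ : Fin n) = (⟨zl + m₂.val, by omega⟩ : Fin n) → m₁ = m₂ := by
  intro m₁ m₂ h
  have := Fin.mk.injEq (zl + m₁.val) _ (zl + m₂.val) _ ▸ h
  apply Fin.ext
  have := Fin.val_eq_of_eq h
  simpa using this

private lemma card_itv (n z zl : ℕ) (hzl : zl ≤ z) (hz : z ≤ n) :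
    (itv n z zl).card = n - z := by
  rw [itv_eq_image n z zl hzl hz,
    Finset.card_image_of_injective _ (fun m₁ m₂ h => itv_inj n z zl hzl hz m₁ m₂ h)]
  simp

private lemma sum_itv (n z zl : ℕ) (hzl : zl ≤ z) (hz : z ≤ n) (f : Fin n → ℝ) :
    ∑ i ∈ itv n z zl, f i = ∑ m : Fin (n - z), f ⟨zl + m.val, by omega⟩ := by
  rw [itv_eq_image n z zl hzl hz]
  exact Finset.sum_image (fun m₁ _ m₂ _ h => itv_inj n z zl hzl hz m₁ m₂ h)

/-- Sub-lemma A: for any fixed y, some interval is at least as good as any S. -/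
private lemma lemA (n z : ℕ) (hzn : z + 1 ≤ n) (x : Fin n → ℝ) (hx : Monotone x)
    (y : ℝ) (S : Finset (Fin n)) (hS : S.card = n - z) :
    ∃ zl, zl ≤ z ∧ ∑ i ∈ itv n z zl, |y - x i| ≤ ∑ i ∈ S, |y - x i| := by
  have hz : z ≤ n := by omega
  set k := n - z with hk
  have hk1 : 1 ≤ k := by omega
  set f : Fin n → ℝ := fun i => |y - x i| with hf
  haveI : Nonempty (Fin n) := ⟨⟨0, by omega⟩⟩
  obtain ⟨p, -, hp⟩ := Finset.exists_min_image univ f univ_nonempty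
  have hp' : ∀ i, f p ≤ f i := fun i => hp i (mem_univ i)
  -- f is antitone below p, monotone above p
  have hanti : ∀ i j : Fin n, i ≤ j → j ≤ p → f j ≤ f i := by
    intro i j hij hjp
    calc f j ≤ max (f i) (f p) := abs_qc y (x i) (x j) (x p) (hx hij) (hx hjp)
    _ ≤ f i := max_le le_rfl (hp' i)
  have hmono : ∀ i j : Fin n, p ≤ i → i ≤ j → f i ≤ f j := by
    intro i j hpi hij
    calc f i ≤ max (f p) (f j) := abs_qc y (x p) (x i) (x j) (hx hpi) (hx hij)
    _ ≤ f j := max_le (hp' j) le_rfl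
  set σ : Fin k ↪o Fin n := S.orderEmbOfFin hS with hσ
  have hσmono : StrictMono σ := σ.strictMono
  set Q : Fin k → Prop := fun m => σ m < p with hQ
  have hdc : ∀ m m' : Fin k, m ≤ m' → Q m' → Q m := by
    intro m m' hle hQ'
    exact lt_of_le_of_lt (σ.monotone hle) hQ'
  obtain ⟨a, ha⟩ : ∃ a : ℕ, a = (univ.filter Q).card := ⟨_, rfl⟩
  have hQiff : ∀ m, Q m ↔ m.val < a := fun m => ha ▸ lower_set_iff Q hdc m
  -- a ≤ p.val
  have hap : a ≤ p.val := by
    have : (univ.filter Q).card ≤ (Finset.Iio p).card := by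
      apply card_le_card_of_injOn (fun m => σ m)
      · intro m hm
        exact mem_Iio.mpr (mem_filter.mp hm).2
      · exact fun m₁ _ m₂ _ h => σ.injective h
    rw [Fin.card_Iio] at this
    omega
  -- k - a ≤ n - p.val
  have hka : k - a ≤ n - p.val := by
    have hsum := Finset.card_filter_add_card_filter_not (s := univ) Q
    rw [card_univ, Fintype.card_fin] at hsum
    have : (univ.filter (fun m => ¬ Q m)).card ≤ (Finset.Ici p).card := by
      apply card_le_card_of_injOn (fun m => σ m)
      · intro m hm
        exact mem_Ici.mpr (le_of_not_gt (mem_filter.mp hm).2)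
      · exact fun m₁ _ m₂ _ h => σ.injective h
    rw [Fin.card_Ici] at this
    omega
  have hpn : p.val < n := p.isLt
  obtain ⟨zl, hzl⟩ : ∃ zl : ℕ, zl = p.val - a := ⟨_, rfl⟩
  have hbound : zl + k ≤ n := by omega
  have hzlz : zl ≤ z := by omega
  refine ⟨zl, hzlz, ?_⟩
  -- rewrite both sums as sums over Fin k
  have hSsum : ∑ i ∈ S, f i = ∑ m : Fin k, f (σ m) := by
    have himg : Finset.image (fun m => σ m) univ = S := by
      ext i
      simp only [Finset.mem_image, mem_univ, true_and]
      constructor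
      · rintro ⟨m, rfl⟩; exact S.orderEmbOfFin_mem hS m
      · intro hi
        have : i ∈ Set.range (⇑σ) := by
          rw [Finset.range_orderEmbOfFin]; exact hi
        obtain ⟨m, hm⟩ := this
        exact ⟨m, hm⟩
    rw [← himg]
    exact Finset.sum_image (fun m₁ _ m₂ _ h => σ.injective h)
  rw [hSsum, sum_itv n z zl hzlz hz f]
  apply Finset.sum_le_sum
  intro m _
  -- key pointwise bound
  have hmk := m.isLt
  have haK : a ≤ k := by
    have := Finset.card_filter_le (univ : Finset (Fin k)) Q
    rw [card_univ, Fintype.card_fin] at this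
    omega
  by_cases hm : m.val < a
  · -- σ m < p, and σ m ≤ zl + m ≤ p
    have hQm : σ m < p := (hQiff m).mpr hm
    have ha1 : a - 1 < k := by omega
    have hQlast : Q ⟨a - 1, ha1⟩ := (hQiff _).mpr (by simp; omega)
    have hgap := gap_lemma σ hσmono (a - 1 - m.val) m ⟨a - 1, ha1⟩ (by simp; omega)
    have hlast : (σ ⟨a - 1, ha1⟩).val < p.val := hQlast
    have h1 : (σ m).val ≤ zl + m.val := by omega
    have h2 : zl + m.val < p.val := by omega
    exact hanti (σ m) ⟨zl + m.val, by omega⟩ (by rw [Fin.le_def]; exact h1)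
      (by rw [Fin.le_def]; exact h2.le)
  · -- p ≤ σ m and zl + m ≤ σ m, p ≤ zl + m
    have hma : a ≤ m.val := by omega
    have hak : a < k := by omega
    have hQa : ¬ Q ⟨a, hak⟩ := by
      rw [hQiff]; simp
    have hpa : p.val ≤ (σ ⟨a, hak⟩).val := le_of_not_gt hQa
    have hgap := gap_lemma σ hσmono (m.val - a) ⟨a, hak⟩ m (by simp; omega)
    have h1 : zl + m.val ≤ (σ m).val := by omega
    have h2 : p.val ≤ zl + m.val := by omega
    exact hmono ⟨zl + m.val, by omega⟩ (σ m) (by rw [Fin.le_def]; exact h2)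
      (by rw [Fin.le_def]; exact h1)

/-- Sub-lemma B: the min over y is attained at a data point of T. -/
private lemma lemB {n : ℕ} (x : Fin n → ℝ) (y : ℝ) (T : Finset (Fin n))
    (hT : T.Nonempty) :
    ∃ j ∈ T, ∑ i ∈ T, |x j - x i| ≤ ∑ i ∈ T, |y - x i| := by
  classical
  set L := T.filter (fun i => x i ≤ y) with hL
  set R := T.filter (fun i => ¬ x i ≤ y) with hR
  have hsplit : ∀ g : Fin n → ℝ, ∑ i ∈ T, g i = ∑ i ∈ L, g i + ∑ i ∈ R, g i := by
    intro g
    rw [hL, hR]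
    exact (Finset.sum_filter_add_sum_filter_not T _ g).symm
  have hcard : L.card + R.card = T.card :=
    Finset.card_filter_add_card_filter_not _
  rcases le_or_gt R.card L.card with hc | hc
  · -- heavier left side
    have hLne : L.Nonempty := by
      rw [← Finset.card_pos]
      have := Finset.card_pos.mpr hT
      omega
    obtain ⟨j, hjL, hjmax⟩ := Finset.exists_max_image L x hLne
    have hjT : j ∈ T := (Finset.mem_filter.mp hjL).1
    have hjy : x j ≤ y := (Finset.mem_filter.mp hjL).2
    set d := y - x j with hd
    have hd0 : 0 ≤ d := by simp [hd]; linarith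
    refine ⟨j, hjT, ?_⟩
    have hLsum : ∑ i ∈ L, |x j - x i| = (∑ i ∈ L, |y - x i|) - L.card * d := by
      have hterm : ∀ i ∈ L, |x j - x i| = |y - x i| - d := by
        intro i hi
        have h1 : x i ≤ x j := hjmax i hi
        have h2 : x i ≤ y := (Finset.mem_filter.mp hi).2
        rw [abs_of_nonneg (by linarith), abs_of_nonneg (by linarith), hd]
        ring
      rw [Finset.sum_congr rfl hterm, Finset.sum_sub_distrib, Finset.sum_const,
        nsmul_eq_mul]
    have hRsum : ∑ i ∈ R, |x j - x i| = (∑ i ∈ R, |y - x i|) + R.card * d := by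
      have hterm : ∀ i ∈ R, |x j - x i| = |y - x i| + d := by
        intro i hi
        have h2 : y < x i := lt_of_not_ge (Finset.mem_filter.mp hi).2
        rw [abs_of_nonpos (by linarith), abs_of_nonpos (by linarith), hd]
        ring
      rw [Finset.sum_congr rfl hterm, Finset.sum_add_distrib, Finset.sum_const,
        nsmul_eq_mul]
    rw [hsplit (fun i => |x j - x i|), hsplit (fun i => |y - x i|), hLsum, hRsum]
    have hmul : (R.card : ℝ) * d ≤ (L.card : ℝ) * d :=
      mul_le_mul_of_nonneg_right (by exact_mod_cast hc) hd0
    linarith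
  · -- heavier right side
    have hRne : R.Nonempty := by
      rw [← Finset.card_pos]
      omega
    obtain ⟨j, hjR, hjmin⟩ := Finset.exists_min_image R x hRne
    have hjT : j ∈ T := (Finset.mem_filter.mp hjR).1
    have hjy : y < x j := lt_of_not_ge (Finset.mem_filter.mp hjR).2
    set d := x j - y with hd
    have hd0 : 0 ≤ d := by simp [hd]; linarith
    refine ⟨j, hjT, ?_⟩
    have hRsum : ∑ i ∈ R, |x j - x i| = (∑ i ∈ R, |y - x i|) - R.card * d := by
      have hterm : ∀ i ∈ R, |x j - x i| = |y - x i| - d := by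
        intro i hi
        have h1 : x j ≤ x i := hjmin i hi
        have h2 : y < x i := lt_of_not_ge (Finset.mem_filter.mp hi).2
        rw [abs_of_nonpos (by linarith), abs_of_nonpos (by linarith), hd]
        ring
      rw [Finset.sum_congr rfl hterm, Finset.sum_sub_distrib, Finset.sum_const,
        nsmul_eq_mul]
    have hLsum : ∑ i ∈ L, |x j - x i| = (∑ i ∈ L, |y - x i|) + L.card * d := by
      have hterm : ∀ i ∈ L, |x j - x i| = |y - x i| + d := by
        intro i hi
        have h2 : x i ≤ y := (Finset.mem_filter.mp hi).2
        rw [abs_of_nonneg (by linarith), abs_of_nonneg (by linarith), hd]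
        ring
      rw [Finset.sum_congr rfl hterm, Finset.sum_add_distrib, Finset.sum_const,
        nsmul_eq_mul]
    rw [hsplit (fun i => |x j - x i|), hsplit (fun i => |y - x i|), hLsum, hRsum]
    have hmul : (L.card : ℝ) * d ≤ (R.card : ℝ) * d :=
      mul_le_mul_of_nonneg_right (by exact_mod_cast hc.le) hd0
    linarith

theorem stmt_7 (n z : ℕ) (hn : 3 ≤ n) (hz1 : 1 ≤ z) (hz2 : z ≤ n - 2)
    (x : Fin n → ℝ) (hx : Monotone x) :
    ∃ (ystar : ℝ) (Sstar : Finset (Fin n)) (zl : ℕ), zl ≤ z ∧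
      Sstar.card = n - z ∧
      (∀ (y : ℝ) (S : Finset (Fin n)), S.card = n - z →
        ∑ i ∈ Sstar, |ystar - x i| ≤ ∑ i ∈ S, |y - x i|) ∧
      Sstar = Finset.univ.filter (fun i : Fin n => zl ≤ i.val ∧ i.val < n - (z - zl)) := by
  classical
  have hzn : z + 1 ≤ n := by omega
  have hz : z ≤ n := by omega
  haveI : Nonempty (Fin n) := ⟨⟨0, by omega⟩⟩
  set F : Fin n × Fin (z + 1) → ℝ :=
    fun c => ∑ i ∈ itv n z c.2.val, |x c.1 - x i| with hF
  obtain ⟨c, -, hc⟩ := Finset.exists_min_image univ F univ_nonempty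
  have hc2 : c.2.val ≤ z := by omega
  refine ⟨x c.1, itv n z c.2.val, c.2.val, hc2, card_itv n z c.2.val hc2 hz, ?_, rfl⟩
  intro y S hS
  obtain ⟨zl', hzl', hA⟩ := lemA n z hzn x hx y S hS
  have hTne : (itv n z zl').Nonempty := by
    rw [← Finset.card_pos, card_itv n z zl' hzl' hz]
    omega
  obtain ⟨j, hjT, hB⟩ := lemB x y (itv n z zl') hTne
  calc ∑ i ∈ itv n z c.2.val, |x c.1 - x i|
      ≤ F (j, ⟨zl', by omega⟩) := hc _ (mem_univ _)
    _ = ∑ i ∈ itv n z zl', |x j - x i| := rfl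
    _ ≤ ∑ i ∈ itv n z zl', |y - x i| := hB
    _ ≤ ∑ i ∈ S, |y - x i| := hA
end

section
/- Let x₁ ≤ x₂ ≤ ... ≤ x_n be real numbers, 1 ≤ z ≤ n - 2, and suppose (y*, S*) minimizes Σ_{i ∈ S} |y - x_i| over y ∈ ℝ and subsets S of size n - z. If i ∉ S* with x_i ≤ y*, then every j with x_j < x_i also satisfies j ∉ S*; symmetrically, if i ∉ S* with x_i ≥ y*, then every j with x_j > x_i satisfies j ∉ S*. -/
theorem stmt_8 (n z : ℕ) (hz1 : 1 ≤ z) (hz2 : z ≤ n - 2)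
    (x : Fin n → ℝ) (hx : Monotone x)
    (ystar : ℝ) (Sstar : Finset (Fin n)) (hcard : Sstar.card = n - z)
    (hopt : ∀ (y : ℝ) (S : Finset (Fin n)), S.card = n - z →
      ∑ i ∈ Sstar, |ystar - x i| ≤ ∑ i ∈ S, |y - x i|) :
    (∀ i, i ∉ Sstar → x i ≤ ystar → ∀ j, x j < x i → j ∉ Sstar) ∧
    (∀ i, i ∉ Sstar → ystar ≤ x i → ∀ j, x i < x j → j ∉ Sstar) := by
  have key : ∀ i, i ∉ Sstar → ∀ j ∈ Sstar, |ystar - x i| < |ystar - x j| → False := by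
    intro i hi j hj hlt
    have hi' : i ∉ Sstar.erase j := fun h => hi (Finset.mem_of_mem_erase h)
    have hcard' : (insert i (Sstar.erase j)).card = n - z := by
      rw [Finset.card_insert_of_notMem hi', Finset.card_erase_of_mem hj, hcard]
      have : 1 ≤ Sstar.card := Finset.card_pos.mpr ⟨j, hj⟩
      omega
    have h1 := hopt ystar _ hcard'
    rw [Finset.sum_insert hi'] at h1
    rw [← Finset.sum_erase_add Sstar _ hj] at h1
    linarith
  constructor
  · intro i hi hle j hji hjS
    have hji' : x j < ystar := lt_of_lt_of_le hji hle
    exact key i hi j hjS (by rw [abs_of_nonneg (by linarith), abs_of_nonneg (by linarith)]; linarith)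
  · intro i hi hle j hji hjS
    have hji' : ystar < x j := lt_of_le_of_lt hle hji
    exact key i hi j hjS (by rw [abs_of_nonpos (by linarith), abs_of_nonpos (by linarith)]; linarith)
end

section
/- Let n ≥ 3, 1 ≤ z ≤ n - 2, and x : Fin n → ℝ sorted. Then there exists an optimal location y* for the utilitarian social cost with z outliers such that y* = x_k for some index k with ⌈(n - z + 1)/2⌉ ≤ k ≤ ⌈(n - z)/2⌉ + z. -/
/-- Utilitarian social cost with `z` outliers of placing the facility at `y`:
minimum over sets `S` of `n - z` non-outliers of the total distance. -/
noncomputable def OPTsc (n z : ℕ) (x : Fin n → ℝ) (y : ℝ) : ℝ :=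
  sInf {c : ℝ | ∃ S : Finset (Fin n), S.card = n - z ∧ c = ∑ i ∈ S, |y - x i|}

/-- Optimal utilitarian social cost with `z` outliers. -/
noncomputable def OPTscStar (n z : ℕ) (x : Fin n → ℝ) : ℝ :=
  sInf (Set.range (OPTsc n z x))

private lemma pair_abs (a b c y : ℝ) (h1 : a ≤ c) (h2 : c ≤ b) :
    |c - a| + |c - b| ≤ |y - a| + |y - b| := by
  have h3 : |c - a| = c - a := abs_of_nonneg (by linarith)
  have h4 : |c - b| = b - c := by rw [abs_sub_comm]; exact abs_of_nonneg (by linarith)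
  have h5 : y - a ≤ |y - a| := le_abs_self _
  have h6 : b - y ≤ |y - b| := by rw [abs_sub_comm]; exact le_abs_self _
  linarith

/-- Median-type minimization: if `c` lies (weakly) between the lower and upper
median values of `x` on `S`, then `c` minimizes the sum of absolute deviations. -/
private lemma sum_abs_median_le {n m : ℕ} (x : Fin n → ℝ) (S : Finset (Fin n))
    (hS : S.card = m) (c y : ℝ)
    (H1 : ∀ t : Fin m, 2 * t.val + 1 ≤ m → x (S.orderEmbOfFin hS t) ≤ c)
    (H2 : ∀ t : Fin m, m ≤ 2 * t.val + 1 → c ≤ x (S.orderEmbOfFin hS t)) :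
    ∑ i ∈ S, |c - x i| ≤ ∑ i ∈ S, |y - x i| := by
  set σ := S.orderEmbOfFin hS with hσ
  have hsum : ∀ d : ℝ, ∑ i ∈ S, |d - x i| = ∑ t : Fin m, |d - x (σ t)| := by
    intro d
    rw [← Finset.sum_attach S (fun i => |d - x i|)]
    refine (Fintype.sum_equiv (S.orderIsoOfFin hS).toEquiv
      (fun t : Fin m => |d - x (σ t)|) (fun i : S => |d - x (i : Fin n)|) ?_).symm
    intro t
    simp [Finset.coe_orderIsoOfFin_apply, hσ]
  have key : ∀ t : Fin m,
      |c - x (σ t)| + |c - x (σ t.rev)| ≤ |y - x (σ t)| + |y - x (σ t.rev)| := by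
    intro t
    have htlt : t.val < m := t.isLt
    have hrevval : (t.rev).val = m - (t.val + 1) := Fin.val_rev t
    rcases le_or_gt (2 * t.val + 1) m with h | h
    · have hrev : m ≤ 2 * (t.rev).val + 1 := by omega
      exact pair_abs _ _ _ _ (H1 t h) (H2 t.rev hrev)
    · have hrev : 2 * (t.rev).val + 1 ≤ m := by omega
      have := pair_abs (x (σ t.rev)) (x (σ t)) c y (H1 t.rev hrev) (H2 t (by omega))
      linarith
  have h2 : ∑ t : Fin m, (|c - x (σ t)| + |c - x (σ t.rev)|)
      ≤ ∑ t : Fin m, (|y - x (σ t)| + |y - x (σ t.rev)|) :=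
    Finset.sum_le_sum (fun t _ => key t)
  have hrevsum : ∀ d : ℝ,
      ∑ t : Fin m, |d - x (σ t.rev)| = ∑ t : Fin m, |d - x (σ t)| := by
    intro d
    exact Equiv.sum_comp (Fin.revPerm) (fun t => |d - x (σ t)|)
  rw [Finset.sum_add_distrib, Finset.sum_add_distrib, hrevsum, hrevsum] at h2
  rw [hsum, hsum]
  linarith

private lemma OPTsc_exists_set (n z : ℕ) (hzn : z ≤ n) (x : Fin n → ℝ) (y : ℝ) :
    ∃ S : Finset (Fin n), S.card = n - z ∧ OPTsc n z x y = ∑ i ∈ S, |y - x i| := by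
  have hfin : {c : ℝ | ∃ S : Finset (Fin n),
      S.card = n - z ∧ c = ∑ i ∈ S, |y - x i|}.Finite := by
    have heq : {c : ℝ | ∃ S : Finset (Fin n), S.card = n - z ∧ c = ∑ i ∈ S, |y - x i|}
        = ↑(((Finset.univ : Finset (Fin n)).powersetCard (n - z)).image
            (fun S => ∑ i ∈ S, |y - x i|)) := by
      ext c
      simp only [Set.mem_setOf_eq, Finset.coe_image, Set.mem_image, Finset.mem_coe,
        Finset.mem_powersetCard]
      constructor
      · rintro ⟨S, hS, rfl⟩
        exact ⟨S, ⟨Finset.subset_univ S, hS⟩, rfl⟩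
      · rintro ⟨S, ⟨_, hS⟩, rfl⟩
        exact ⟨S, hS, rfl⟩
    rw [heq]
    exact Finset.finite_toSet _
  have hne : {c : ℝ | ∃ S : Finset (Fin n),
      S.card = n - z ∧ c = ∑ i ∈ S, |y - x i|}.Nonempty := by
    obtain ⟨S, _, hScard⟩ := Finset.exists_subset_card_eq
      (show n - z ≤ (Finset.univ : Finset (Fin n)).card by simp)
    exact ⟨∑ i ∈ S, |y - x i|, S, hScard, rfl⟩
  have := hne.csInf_mem hfin
  obtain ⟨S, hS, hc⟩ := this
  exact ⟨S, hS, hc⟩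

private lemma OPTsc_le_sum (n z : ℕ) (x : Fin n → ℝ) (y : ℝ) (S : Finset (Fin n))
    (hS : S.card = n - z) : OPTsc n z x y ≤ ∑ i ∈ S, |y - x i| := by
  apply csInf_le
  · refine ⟨0, ?_⟩
    rintro c ⟨T, _, rfl⟩
    exact Finset.sum_nonneg (fun i _ => abs_nonneg _)
  · exact ⟨S, hS, rfl⟩

theorem stmt_9 (n z : ℕ) (hn : 3 ≤ n) (hz1 : 1 ≤ z) (hz2 : z ≤ n - 2)
    (x : Fin n → ℝ) (hx : Monotone x) :
    ∃ k : Fin n, (n - z + 2) / 2 ≤ k.val + 1 ∧ k.val + 1 ≤ (n - z + 1) / 2 + z ∧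
      OPTsc n z x (x k) = OPTscStar n z x := by
  have hzn : z + 2 ≤ n := by omega
  set m := n - z with hm
  have hm2 : 2 ≤ m := by omega
  have hnm : n = m + z := by omega
  -- the candidate index set
  set K : Finset (Fin n) := Finset.univ.filter
    (fun k => (n - z + 2) / 2 ≤ k.val + 1 ∧ k.val + 1 ≤ (n - z + 1) / 2 + z) with hK
  have hKne : K.Nonempty := by
    refine ⟨⟨(m + 2) / 2 - 1, by omega⟩, ?_⟩
    rw [hK, Finset.mem_filter]
    refine ⟨Finset.mem_univ _, ?_, ?_⟩ <;> simp only [← hm] <;> omega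
  -- the key claim: for every y, some k ∈ K has OPTsc (x k) ≤ OPTsc y
  have main : ∀ y : ℝ, ∃ k ∈ K, OPTsc n z x (x k) ≤ OPTsc n z x y := by
    intro y
    obtain ⟨S, hScard, hOPT⟩ := OPTsc_exists_set n z (by omega) x y
    have hScard' : S.card = m := hScard
    set σ := S.orderEmbOfFin hScard' with hσ
    have hσmono : StrictMono σ := σ.strictMono
    -- lower bound on σ
    have hlowaux : ∀ j : ℕ, ∀ h : j < m, j ≤ (σ ⟨j, h⟩).val := by
      intro j
      induction j with
      | zero => intro h; exact Nat.zero_le _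
      | succ i ih =>
        intro h
        have hi : i < m := by omega
        have h1 := ih hi
        have h2 : σ ⟨i, hi⟩ < σ ⟨i + 1, h⟩ := hσmono (by simp [Fin.lt_def])
        have h3 : (σ ⟨i, hi⟩).val < (σ ⟨i + 1, h⟩).val := h2
        omega
    have hlow : ∀ t : Fin m, t.val ≤ (σ t).val := by
      intro t; have := hlowaux t.val t.isLt
      simpa using this
    -- upper bound on σ
    have hhighaux : ∀ j : ℕ, ∀ h : j < m,
        (σ ⟨m - 1 - j, by omega⟩).val ≤ n - 1 - j := by
      intro j
      induction j with
      | zero =>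
        intro h
        have := (σ ⟨m - 1 - 0, by omega⟩).isLt
        omega
      | succ i ih =>
        intro h
        have hi : i < m := by omega
        have h1 := ih hi
        have h2 : σ ⟨m - 1 - (i + 1), by omega⟩ < σ ⟨m - 1 - i, by omega⟩ :=
          hσmono (by simp [Fin.lt_def]; omega)
        have h3 : (σ ⟨m - 1 - (i + 1), by omega⟩).val < (σ ⟨m - 1 - i, by omega⟩).val := h2
        omega
    have hhigh : ∀ t : Fin m, (σ t).val ≤ t.val + z := by
      intro t
      have ht : t.val < m := t.isLt
      have := hhighaux (m - 1 - t.val) (by omega)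
      have heq : (⟨m - 1 - (m - 1 - t.val), by omega⟩ : Fin m) = t := by
        ext; simp; omega
      rw [heq] at this
      omega
    -- the upper median index within S
    set u : Fin m := ⟨m / 2, by omega⟩ with hu
    have hu1 : m / 2 ≤ (σ u).val := hlow u
    have hu2 : (σ u).val ≤ m / 2 + z := hhigh u
    by_cases hcase : (σ u).val + 1 ≤ (m + 1) / 2 + z
    · -- use the upper median of S itself
      refine ⟨σ u, ?_, ?_⟩
      · rw [hK, Finset.mem_filter]
        refine ⟨Finset.mem_univ _, ?_, ?_⟩ <;> simp only [← hm] <;> omega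
      · calc OPTsc n z x (x (σ u)) ≤ ∑ i ∈ S, |x (σ u) - x i| :=
              OPTsc_le_sum n z x _ S hScard
          _ ≤ ∑ i ∈ S, |y - x i| := by
              apply sum_abs_median_le x S hScard'
              · intro t ht
                apply hx
                have : t.val ≤ u.val := by simp only [hu]; omega
                exact hσmono.monotone (by exact this)
              · intro t ht
                apply hx
                have : u.val ≤ t.val := by simp only [hu]; omega
                exact hσmono.monotone (by exact this)
          _ = OPTsc n z x y := hOPT.symm
    · -- degenerate case: m even and σ u is as large as possible; shift down by one
      have hσu : (σ u).val = m / 2 + z := by omega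
      have hmeven : (m + 1) / 2 = m / 2 := by omega
      refine ⟨⟨m / 2 + z - 1, by omega⟩, ?_, ?_⟩
      · rw [hK, Finset.mem_filter]
        refine ⟨Finset.mem_univ _, ?_, ?_⟩ <;> simp only [← hm] <;> omega
      · calc OPTsc n z x (x ⟨m / 2 + z - 1, by omega⟩)
              ≤ ∑ i ∈ S, |x ⟨m / 2 + z - 1, by omega⟩ - x i| :=
              OPTsc_le_sum n z x _ S hScard
          _ ≤ ∑ i ∈ S, |y - x i| := by
              apply sum_abs_median_le x S hScard'
              · intro t ht
                apply hx
                have htu : t.val < u.val := by simp only [hu]; omega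
                have : σ t < σ u := hσmono (by exact htu)
                have h3 : (σ t).val < (σ u).val := this
                show (σ t).val ≤ m / 2 + z - 1
                omega
              · intro t ht
                apply hx
                have htu : u.val ≤ t.val := by simp only [hu]; omega
                have : σ u ≤ σ t := hσmono.monotone (by exact htu)
                have h3 : (σ u).val ≤ (σ t).val := this
                show m / 2 + z - 1 ≤ (σ t).val
                omega
          _ = OPTsc n z x y := hOPT.symm
  -- take the minimizer over K
  obtain ⟨k, hkK, hkmin⟩ := K.exists_min_image (fun k => OPTsc n z x (x k)) hKne
  have hkbounds := (Finset.mem_filter.mp (hK ▸ hkK)).2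
  refine ⟨k, hkbounds.1, hkbounds.2, ?_⟩
  apply le_antisymm
  · refine le_csInf ⟨OPTsc n z x 0, Set.mem_range_self 0⟩ ?_
    rintro c ⟨y, rfl⟩
    obtain ⟨k', hk'K, hk'⟩ := main y
    exact le_trans (hkmin k' hk'K) hk'
  · apply csInf_le
    · refine ⟨0, ?_⟩
      rintro c ⟨y, rfl⟩
      obtain ⟨S, hS, hOPT⟩ := OPTsc_exists_set n z (by omega) x y
      rw [hOPT]
      exact Finset.sum_nonneg (fun i _ => abs_nonneg _)
    · exact ⟨x k, rfl⟩
end
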